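/- arXiv:2301.06212 — 5 statements merged into one kernel-verified Lean document; each statement's English description precedes it below -/
import Mathlib

section
/- Let p be a prime and t ≥ 1 an integer, N = p^t. There exists a p-AP-free subset S of ℤ/Nℤ with |S| = (p-1)^t, namely the set of residues of integers in [1, p^t] all of whose base-p digits lie in {1,…,p-1}. -/
open Finset

lemma decompAux (p : ℕ) (g : ℕ → ℕ) (m : ℕ) :
    ∑ i ∈ Finset.range (m+1), g i * p ^ i
      = g 0 + p * ∑ i ∈ Finset.range m, g (i+1) * p ^ i := by
  rw [Finset.sum_range_succ', Finset.mul_sum]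
  simp only [pow_zero, mul_one, pow_succ]
  rw [add_comm]
  congr 1
  exact Finset.sum_congr rfl (fun i _ => by ring)

lemma sumDigitsLt (p : ℕ) (g : ℕ → ℕ) (hg : ∀ i, g i < p) (t : ℕ) :
    (∑ i ∈ Finset.range t, g i * p ^ i) + 1 ≤ p ^ t := by
  induction t with
  | zero => simp
  | succ m ih =>
    rw [Finset.sum_range_succ, pow_succ]
    have h1 : g m + 1 ≤ p := hg m
    have h2 : (g m + 1) * p ^ m ≤ p * p ^ m := Nat.mul_le_mul_right _ h1
    have h3 : (g m + 1) * p ^ m = g m * p ^ m + p ^ m := by ring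
    have h4 : p * p ^ m = p ^ m * p := by ring
    omega

lemma sumDigitsDivMod (p : ℕ) (hp : 2 ≤ p) :
    ∀ (k t : ℕ) (g : ℕ → ℕ), (∀ i, g i < p) → k < t →
      (∑ i ∈ Finset.range t, g i * p ^ i) / p ^ k % p = g k := by
  intro k
  induction k with
  | zero =>
    intro t g hg hk
    obtain ⟨m, rfl⟩ : ∃ m, t = m + 1 := ⟨t - 1, by omega⟩
    rw [decompAux]
    simp [Nat.add_mul_mod_self_left, Nat.mod_eq_of_lt (hg 0)]
  | succ k ih =>
    intro t g hg hk
    obtain ⟨m, rfl⟩ : ∃ m, t = m + 1 := ⟨t - 1, by omega⟩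
    rw [decompAux]
    have hdiv : (g 0 + p * ∑ i ∈ Finset.range m, g (i+1) * p ^ i) / p
        = ∑ i ∈ Finset.range m, g (i+1) * p ^ i := by
      rw [Nat.add_mul_div_left _ _ (by omega : 0 < p), Nat.div_eq_of_lt (hg 0), zero_add]
    rw [pow_succ', ← Nat.div_div_eq_div_mul, hdiv]
    exact ih m (fun i => g (i+1)) (fun i => hg (i+1)) (by omega)

/-- The `k`-term arithmetic progression with base `x` and common difference `d`. -/
def AP {G : Type*} [AddCommGroup G] (k : ℕ) (x d : G) : Set G :=
  {g | ∃ i : ℕ, i < k ∧ g = x + i • d}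

/-- A set is `k`-AP-free if it contains no non-trivial `k`-term arithmetic progression. -/
def APFree {G : Type*} [AddCommGroup G] (k : ℕ) (S : Set G) : Prop :=
  ∀ x d : G, d ≠ 0 → ¬ AP k x d ⊆ S

/-- `kappa G r`: the least `k` such that some `r`-coloring of `G` has all color classes
`k`-AP-free. -/
noncomputable def kappa (G : Type*) [AddCommGroup G] (r : ℕ) : ℕ :=
  sInf {k | ∃ c : G → Fin r, ∀ i : Fin r, APFree k (c ⁻¹' {i})}

theorem digit_set_pAPFree (p t : ℕ) (hp : p.Prime) (ht : 1 ≤ t) :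
    ∃ S : Set (ZMod (p ^ t)),
      S = Set.range (fun f : Fin t → Fin (p - 1) =>
        ((∑ i : Fin t, ((f i : ℕ) + 1) * p ^ (i : ℕ) : ℕ) : ZMod (p ^ t))) ∧
      APFree p S ∧ S.ncard = (p - 1) ^ t := by
  haveI : Fact p.Prime := ⟨hp⟩
  have hp2 : 2 ≤ p := hp.two_le
  haveI : NeZero (p ^ t) := ⟨pow_ne_zero t hp.pos.ne'⟩
  haveI : NeZero p := ⟨hp.pos.ne'⟩
  set F : (Fin t → Fin (p - 1)) → ZMod (p ^ t) := fun f =>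
    ((∑ i : Fin t, ((f i : ℕ) + 1) * p ^ (i : ℕ) : ℕ) : ZMod (p ^ t)) with hF
  have gdef : ∀ f : Fin t → Fin (p - 1), ∃ g : ℕ → ℕ, (∀ i, g i < p) ∧ (∀ i, 0 < g i) ∧
      (∀ (i : ℕ) (h : i < t), g i = (f ⟨i, h⟩ : ℕ) + 1) ∧
      (∑ i : Fin t, ((f i : ℕ) + 1) * p ^ (i : ℕ)) = ∑ i ∈ Finset.range t, g i * p ^ i := by
    intro f
    refine ⟨fun i => if h : i < t then (f ⟨i, h⟩ : ℕ) + 1 else 1, ?_, ?_, ?_, ?_⟩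
    · intro i
      by_cases h : i < t
      · simp only [dif_pos h]
        have := (f ⟨i, h⟩).isLt
        omega
      · simp only [dif_neg h]; omega
    · intro i; by_cases h : i < t <;> simp [h]
    · intro i h; simp [h]
    · rw [← Fin.sum_univ_eq_sum_range
        (fun i => (if h : i < t then (f ⟨i, h⟩ : ℕ) + 1 else 1) * p ^ i) t]
      exact Finset.sum_congr rfl (fun i _ => by simp [i.isLt])
  have hFval : ∀ f : Fin t → Fin (p - 1),
      (F f).val = ∑ i : Fin t, ((f i : ℕ) + 1) * p ^ (i : ℕ) := by
    intro f
    obtain ⟨g, hglt, _, _, hsum⟩ := gdef f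
    apply ZMod.val_cast_of_lt
    rw [hsum]
    have := sumDigitsLt p g hglt t
    omega
  refine ⟨Set.range F, rfl, ?_, ?_⟩
  · -- APFree
    intro x d hd hsub
    have hdv : d.val ≠ 0 := by
      intro h
      exact hd (by rwa [← ZMod.val_eq_zero])
    set k := padicValNat p d.val with hk
    have hpk : p ^ k ∣ d.val := pow_padicValNat_dvd
    have hpk1 : ¬ p ^ (k + 1) ∣ d.val := pow_succ_padicValNat_not_dvd hdv
    set u := d.val / p ^ k with hu
    have hdu : d.val = p ^ k * u := (Nat.mul_div_cancel' hpk).symm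
    have hpu : ¬ p ∣ u := by
      intro h
      apply hpk1
      rw [hdu, pow_succ]
      exact mul_dvd_mul_left _ h
    have hkt : k < t := by
      have h1 : p ^ k ≤ d.val := Nat.le_of_dvd (Nat.pos_of_ne_zero hdv) hpk
      have h2 : d.val < p ^ t := ZMod.val_lt d
      exact (Nat.pow_lt_pow_iff_right hp.one_lt).mp (lt_of_le_of_lt h1 h2)
    set a := x.val / p ^ k with ha
    have hu0 : (u : ZMod p) ≠ 0 := by
      rw [Ne, ZMod.natCast_eq_zero_iff]; exact hpu
    set w : ZMod p := (-(a : ZMod p)) * (u : ZMod p)⁻¹ with hw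
    set i0 := w.val with hi0def
    have hi0 : i0 < p := ZMod.val_lt w
    have hdvd : p ∣ a + i0 * u := by
      have h0 : ((a + i0 * u : ℕ) : ZMod p) = 0 := by
        push_cast
        rw [hi0def, ZMod.natCast_val, ZMod.cast_id, hw, mul_assoc,
          inv_mul_cancel₀ hu0, mul_one]
        simp
      rwa [ZMod.natCast_eq_zero_iff] at h0
    have hz : x + i0 • d ∈ Set.range F := hsub ⟨i0, hi0, rfl⟩
    obtain ⟨f, hf⟩ := hz
    obtain ⟨g, hglt, hgpos, hgeq, hsum⟩ := gdef f
    have hzval : (x + i0 • d).val = (x.val + i0 * d.val) % p ^ t := by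
      have h1 : ((x.val + i0 * d.val : ℕ) : ZMod (p ^ t)) = x + i0 • d := by
        push_cast
        simp [ZMod.natCast_val, ZMod.cast_id, nsmul_eq_mul]
      rw [← h1, ZMod.val_natCast]
    have hdig0 : (x + i0 • d).val / p ^ k % p = 0 := by
      rw [← Nat.mod_mul_right_div_self, ← pow_succ, hzval,
        Nat.mod_mod_of_dvd _ (pow_dvd_pow p (by omega : k + 1 ≤ t)),
        pow_succ, Nat.mod_mul_right_div_self]
      have h5 := Nat.div_add_mod x.val (p ^ k)
      have hx : x.val + i0 * d.val = x.val % p ^ k + p ^ k * (a + i0 * u) := by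
        calc x.val + i0 * d.val
            = (p ^ k * a + x.val % p ^ k) + i0 * (p ^ k * u) := by rw [← hdu, ha, h5]
          _ = x.val % p ^ k + p ^ k * (a + i0 * u) := by ring
      rw [hx, Nat.add_mul_div_left _ _ (pow_pos hp.pos k),
        Nat.div_eq_of_lt (Nat.mod_lt _ (pow_pos hp.pos k)), zero_add]
      obtain ⟨c, hc⟩ := hdvd
      rw [hc]
      exact Nat.mul_mod_right p c
    have hfz : (x + i0 • d).val / p ^ k % p = (f ⟨k, hkt⟩ : ℕ) + 1 := by
      rw [← hf, hFval f, hsum, sumDigitsDivMod p hp2 k t g hglt hkt, hgeq k hkt]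
    rw [hfz] at hdig0
    omega
  · -- cardinality
    have hinj : Function.Injective F := by
      intro f f' hff
      obtain ⟨g, hglt, _, hgeq, hsum⟩ := gdef f
      obtain ⟨g', hglt', _, hgeq', hsum'⟩ := gdef f'
      have e : (∑ i ∈ Finset.range t, g i * p ^ i) = ∑ i ∈ Finset.range t, g' i * p ^ i := by
        rw [← hsum, ← hsum', ← hFval f, ← hFval f', hff]
      funext i
      have hd := sumDigitsDivMod p hp2 i t g hglt i.isLt
      have hd' := sumDigitsDivMod p hp2 i t g' hglt' i.isLt
      rw [← e] at hd'
      rw [hd] at hd'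
      have e1 := hgeq i i.isLt
      have e2 := hgeq' i i.isLt
      apply Fin.ext
      simp only [Fin.eta] at e1 e2
      omega
    have hcard : (Set.range F).ncard = Nat.card (Fin t → Fin (p - 1)) := by
      rw [← Set.image_univ, Set.ncard_image_of_injective _ hinj, Set.ncard_univ]
    rw [hcard, Nat.card_eq_fintype_card, Fintype.card_fun]
    simp
end

section
/- For a prime p and t ≥ 1, the set A_t of positive integers whose base-p representation has exactly t digits all lying in {1,…,p-1} contains no non-trivial p-term arithmetic progression of integers. -/
private lemma sum_decomp (p : ℕ) {t : ℕ} (a : Fin (t+1) → ℕ) :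
    (∑ i : Fin (t+1), (a i : ℤ) * (p:ℤ)^(i:ℕ)) =
      (a 0 : ℤ) + (p:ℤ) * ∑ i : Fin t, (a (Fin.succ i) : ℤ) * (p:ℤ)^(i:ℕ) := by
  rw [Fin.sum_univ_succ, Finset.mul_sum]
  simp only [Fin.val_zero, pow_zero, mul_one, Fin.val_succ, pow_succ]
  congr 1
  exact Finset.sum_congr rfl (fun i _ => by ring)

private lemma mem_decomp (p : ℕ) (hp : p.Prime) {t : ℕ} {n : ℤ}
    (a : Fin (t+1) → ℕ) (ha : ∀ i, 1 ≤ a i ∧ a i ≤ p - 1)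
    (hn : n = ∑ i : Fin (t+1), (a i : ℤ) * (p:ℤ)^(i:ℕ)) :
    n % p = a 0 ∧ n = (a 0 : ℤ) + (p:ℤ) * ∑ i : Fin t, (a (Fin.succ i) : ℤ) * (p:ℤ)^(i:ℕ) := by
  have heq : n = (a 0 : ℤ) + (p:ℤ) * ∑ i : Fin t, (a (Fin.succ i) : ℤ) * (p:ℤ)^(i:ℕ) := by
    rw [hn, sum_decomp]
  refine ⟨?_, heq⟩
  have h2 := hp.two_le
  have hb := ha 0
  have hlt : (a 0 : ℤ) < p := by
    have : a 0 < p := by omega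
    exact_mod_cast this
  rw [heq, Int.add_mul_emod_self_left, Int.emod_eq_of_lt (by positivity) hlt]

private lemma p_dvd_d (p : ℕ) (hp : p.Prime) (x d : ℤ)
    (h : ∀ i : ℕ, i < p → ¬ (p:ℤ) ∣ (x + (i:ℤ) * d)) : (p:ℤ) ∣ d := by
  by_contra hpd
  haveI := Fact.mk hp
  have hd0 : (d : ZMod p) ≠ 0 := by
    simpa [ZMod.intCast_zmod_eq_zero_iff_dvd] using hpd
  set i0 : ZMod p := (-(x : ZMod p)) * (d : ZMod p)⁻¹ with hi0
  apply h i0.val (ZMod.val_lt i0)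
  rw [← ZMod.intCast_zmod_eq_zero_iff_dvd]
  push_cast
  rw [ZMod.natCast_val, ZMod.cast_id, hi0, mul_assoc, inv_mul_cancel₀ hd0, mul_one]
  ring

private lemma key (p : ℕ) (hp : p.Prime) : ∀ t : ℕ, ∀ x d : ℤ, d ≠ 0 →
    ¬ AP p x d ⊆ {n : ℤ | ∃ a : Fin (t+1) → ℕ,
      (∀ i, 1 ≤ a i ∧ a i ≤ p - 1) ∧ n = ∑ i : Fin (t+1), (a i : ℤ) * (p : ℤ) ^ (i : ℕ)} := by
  intro t
  induction t with
  | zero =>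
    intro x d hd hsub
    have h2 := hp.two_le
    have hnd : ∀ i : ℕ, i < p → ¬ (p:ℤ) ∣ (x + (i:ℤ) * d) := by
      intro i hi hdvd
      obtain ⟨a, ha, hs⟩ := hsub ⟨i, hi, by rw [nsmul_eq_mul]⟩
      obtain ⟨hmod, -⟩ := mem_decomp p hp a ha hs
      rw [Int.dvd_iff_emod_eq_zero] at hdvd
      rw [hmod] at hdvd
      have h1 := (ha 0).1
      have : (1:ℤ) ≤ a 0 := by exact_mod_cast h1
      omega
    have hpd := p_dvd_d p hp x d hnd
    obtain ⟨a, ha, hsa'⟩ := hsub ⟨0, by omega, by rw [nsmul_eq_mul]⟩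
    obtain ⟨b, hb, hsb'⟩ := hsub ⟨1, by omega, by rw [nsmul_eq_mul]⟩
    obtain ⟨-, hsa⟩ := mem_decomp p hp a ha hsa'
    obtain ⟨-, hsb⟩ := mem_decomp p hp b hb hsb'
    simp only [Finset.univ_eq_empty, Finset.sum_empty, mul_zero, add_zero] at hsa hsb
    have hap : (1:ℤ) ≤ a 0 ∧ (a 0 : ℤ) < p := by
      have := (ha 0).1; have := (ha 0).2; constructor <;> [exact_mod_cast ‹1 ≤ a 0›; exact_mod_cast (by omega : a 0 < p)]
    have hbp : (1:ℤ) ≤ b 0 ∧ (b 0 : ℤ) < p := by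
      have := (hb 0).1; have := (hb 0).2; constructor <;> [exact_mod_cast ‹1 ≤ b 0›; exact_mod_cast (by omega : b 0 < p)]
    apply hd
    apply Int.eq_zero_of_abs_lt_dvd hpd
    rw [abs_lt]
    push_cast at hsa hsb
    constructor <;> omega
  | succ t ih =>
    intro x d hd hsub
    have h2 := hp.two_le
    have hp0 : (p:ℤ) ≠ 0 := by exact_mod_cast hp.pos.ne'
    have hnd : ∀ i : ℕ, i < p → ¬ (p:ℤ) ∣ (x + (i:ℤ) * d) := by
      intro i hi hdvd
      obtain ⟨a, ha, hs⟩ := hsub ⟨i, hi, by rw [nsmul_eq_mul]⟩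
      obtain ⟨hmod, -⟩ := mem_decomp p hp a ha hs
      rw [Int.dvd_iff_emod_eq_zero] at hdvd
      rw [hmod] at hdvd
      have h1 := (ha 0).1
      have : (1:ℤ) ≤ a 0 := by exact_mod_cast h1
      omega
    obtain ⟨d', rfl⟩ := p_dvd_d p hp x d hnd
    have hd' : d' ≠ 0 := by
      intro h; apply hd; rw [h, mul_zero]
    set r := x % p with hr
    set x' := x / p with hx'
    have hx : x = p * x' + r := (Int.mul_ediv_add_emod x p).symm
    apply ih x' d' hd'
    intro g hg
    obtain ⟨i, hi, rfl⟩ := hg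
    obtain ⟨a, ha, hs⟩ := hsub ⟨i, hi, by rw [nsmul_eq_mul]⟩
    obtain ⟨hmod, heq⟩ := mem_decomp p hp a ha hs
    have hra : (a 0 : ℤ) = r := by
      rw [← hmod, hr, show x + (i:ℤ) * ((p:ℤ) * d') = x + (p:ℤ) * ((i:ℤ) * d') by ring,
        Int.add_mul_emod_self_left]
    have hM : x' + (i:ℤ) * d' = ∑ j : Fin (t+1), (a (Fin.succ j) : ℤ) * (p:ℤ)^(j:ℕ) := by
      apply mul_left_cancel₀ hp0
      have : x + (i:ℤ) * ((p:ℤ) * d') = (p:ℤ) * (x' + (i:ℤ) * d') + r := by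
        rw [hx]; ring
      rw [this, hra] at heq
      linarith [heq]
    exact ⟨fun j => a (Fin.succ j), fun j => ha (Fin.succ j), by rw [nsmul_eq_mul, hM]⟩

theorem digit_set_int_APFree (p t : ℕ) (hp : p.Prime) (ht : 1 ≤ t) :
    APFree p {n : ℤ | ∃ a : Fin t → ℕ,
      (∀ i, 1 ≤ a i ∧ a i ≤ p - 1) ∧ n = ∑ i : Fin t, (a i : ℤ) * (p : ℤ) ^ (i : ℕ)} := by
  obtain ⟨t', rfl⟩ : ∃ t', t = t' + 1 := ⟨t - 1, (Nat.succ_pred_eq_of_pos ht).symm⟩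
  exact key p hp t'
end

section
/- Let G be a finite abelian group in which every non-identity element has order at least k, and suppose |G| ≤ r^{k-1}/(4k²). Then there is a coloring c : G → {1,…,r} such that no color class contains a non-trivial k-term arithmetic progression, i.e., κ(G; r) ≤ k. -/
open Finset

open scoped Classical

set_option linter.unusedSectionVars false
set_option maxHeartbeats 1000000

section LLL

variable {G : Type*} [AddCommGroup G] [Fintype G]

/-- the coloring `c` is monochromatic on the AP with base `x`, difference `d`. -/
def Mono (k r : ℕ) (c : G → Fin r) (x d : G) : Prop :=
  ∀ i ∈ Finset.range k, c (x + i • d) = c x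

/-- colorings avoiding all the monochromatic events indexed by `S`. -/
noncomputable def avoidSet (k r : ℕ) (S : Finset (G × G)) : Finset (G → Fin r) :=
  Finset.univ.filter fun c => ∀ p ∈ S, ¬ Mono k r c p.1 p.2

lemma avoid_antitone (k r : ℕ) {S T : Finset (G × G)} (h : T ⊆ S) :
    avoidSet k r S ⊆ avoidSet k r T := by
  intro c hc
  simp only [avoidSet, mem_filter, mem_univ, true_and] at hc ⊢
  exact fun p hp => hc p (h hp)

lemma smul_inj (k : ℕ) (hord : ∀ g : G, g ≠ 0 → k ≤ addOrderOf g) {d : G} (hd : d ≠ 0)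
    {i j : ℕ} (hi : i < k) (hj : j < k) (h : i • d = j • d) : i = j := by
  by_contra hne
  wlog hij : i < j generalizing i j
  · exact this hj hi h.symm (Ne.symm hne) (by omega)
  have h0 : (j - i) • d = 0 := by
    have h1 : (j - i) • d + i • d = j • d := by
      rw [← add_nsmul, Nat.sub_add_cancel hij.le]
    have h2 : (j - i) • d + i • d = 0 + i • d := by
      rw [h1, ← h, zero_add]
    exact add_right_cancel h2
  have hdvd : addOrderOf d ∣ (j - i) := addOrderOf_dvd_of_nsmul_eq_zero h0
  have hle : addOrderOf d ≤ j - i := Nat.le_of_dvd (by omega) hdvd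
  have := hord d hd
  omega

lemma mono_congr {k r : ℕ} {c c' : G → Fin r} {y e : G}
    (hk : 0 < k)
    (h : ∀ i ∈ Finset.range k, c (y + i • e) = c' (y + i • e)) :
    Mono k r c y e ↔ Mono k r c' y e := by
  have hy : c y = c' y := by simpa using h 0 (mem_range.mpr hk)
  constructor <;> intro hm i hi
  · rw [← h i hi, hm i hi, hy]
  · rw [h i hi, hm i hi, hy]

lemma indep (k r : ℕ) (hk : 2 ≤ k)
    (hord : ∀ g : G, g ≠ 0 → k ≤ addOrderOf g)
    {x d : G} (hd : d ≠ 0) (T : Finset (G × G))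
    (hT : ∀ p ∈ T, ∀ i ∈ Finset.range k, ∀ j ∈ Finset.range k,
        p.1 + i • p.2 ≠ x + j • d) :
    r ^ (k - 1) * ((avoidSet k r T).filter fun c => Mono k r c x d).card
      ≤ (avoidSet k r T).card := by
  classical
  set A := (avoidSet k r T).filter (fun c => Mono k r c x d) with hA
  set Φ : ((G → Fin r) × (Fin (k-1) → Fin r)) → (G → Fin r) :=
    fun cf g => if h : ∃ i : Fin (k-1), g = x + (i.1+1) • d then cf.2 h.choose else cf.1 g
    with hΦ
  -- uniqueness of the chosen index
  have key : ∀ (i : Fin (k-1)) (h : ∃ i' : Fin (k-1), x + (i.1+1) • d = x + (i'.1+1) • d),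
      h.choose = i := by
    intro i h
    have hs := h.choose_spec
    have h2 : (i.1+1) • d = (h.choose.1+1) • d := add_left_cancel hs
    have h3 := smul_inj k hord hd (by omega : i.1+1 < k)
      (by have := h.choose.2; omega : h.choose.1+1 < k) h2
    exact Fin.ext (by omega)
  have Φval : ∀ cf (i : Fin (k-1)), Φ cf (x + (i.1+1) • d) = cf.2 i := by
    intro cf i
    have hex : ∃ i' : Fin (k-1), x + (i.1+1) • d = x + (i'.1+1) • d := ⟨i, rfl⟩
    simp only [hΦ, dif_pos hex]
    rw [key i hex]
  have Φx : ∀ cf, Φ cf x = cf.1 x := by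
    intro cf
    have hnex : ¬ ∃ i' : Fin (k-1), x = x + (i'.1+1) • d := by
      rintro ⟨i', hi'⟩
      have h2 : (0:ℕ) • d = (i'.1+1) • d := by
        rw [zero_smul]
        have := hi'
        nth_rewrite 1 [← add_zero x] at this
        exact add_left_cancel this
      have := smul_inj k hord hd (by omega : 0 < k)
        (by have := i'.2; omega : i'.1+1 < k) h2
      omega
    simp only [hΦ, dif_neg hnex]
  have Φother : ∀ cf (g : G), (¬ ∃ i' : Fin (k-1), g = x + (i'.1+1) • d) → Φ cf g = cf.1 g := by
    intro cf g hg; simp only [hΦ, dif_neg hg]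
  -- maps to
  have hmaps : ∀ cf ∈ A ×ˢ (Finset.univ : Finset (Fin (k-1) → Fin r)),
      Φ cf ∈ avoidSet k r T := by
    rintro ⟨c, f⟩ hcf
    rw [mem_product] at hcf
    obtain ⟨hc, -⟩ := hcf
    rw [hA, mem_filter] at hc
    obtain ⟨hc, hmono⟩ := hc
    simp only [avoidSet, mem_filter, mem_univ, true_and] at hc ⊢
    intro p hp hm
    refine hc p hp ?_
    rw [← mono_congr (by omega : 0 < k) (c := Φ (c,f)) ?_]
    · exact hm
    · intro i hi
      refine Φother _ _ ?_
      rintro ⟨i', hi'⟩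
      exact hT p hp i hi (i'.1+1) (mem_range.mpr (by have := i'.2; omega)) hi'
  -- injectivity
  have hinj : Set.InjOn Φ ↑(A ×ˢ (Finset.univ : Finset (Fin (k-1) → Fin r))) := by
    rintro ⟨c, f⟩ hcf ⟨c', f'⟩ hcf' heq
    simp only [Finset.coe_product, Set.mem_prod, Finset.mem_coe] at hcf hcf'
    have hcmem := hcf.1
    have hcmem' := hcf'.1
    rw [hA, mem_filter] at hcmem hcmem'
    have hmono := hcmem.2
    have hmono' := hcmem'.2
    have hf : f = f' := by
      funext i
      have := congrFun heq (x + (i.1+1) • d)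
      rwa [Φval, Φval] at this
    have hcx : c x = c' x := by
      have := congrFun heq x
      rwa [Φx, Φx] at this
    have hc : c = c' := by
      funext g
      by_cases hg : ∃ i' : Fin (k-1), g = x + (i'.1+1) • d
      · obtain ⟨i', rfl⟩ := hg
        have h1 : c (x + (i'.1+1) • d) = c x :=
          hmono _ (mem_range.mpr (by have := i'.2; omega))
        have h2 : c' (x + (i'.1+1) • d) = c' x :=
          hmono' _ (mem_range.mpr (by have := i'.2; omega))
        rw [h1, h2, hcx]
      · have := congrFun heq g
        rwa [Φother _ _ hg, Φother _ _ hg] at this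
    rw [hc, hf]
  have hcard := Finset.card_le_card_of_injOn Φ hmaps hinj
  rw [Finset.card_product, Finset.card_univ] at hcard
  have hcf : Fintype.card (Fin (k-1) → Fin r) = r ^ (k-1) := by
    rw [Fintype.card_fun, Fintype.card_fin, Fintype.card_fin]
  rw [hcf] at hcard
  calc r ^ (k-1) * A.card = A.card * r ^ (k-1) := mul_comm _ _
    _ ≤ (avoidSet k r T).card := hcard

lemma nbr (k : ℕ) (x d : G) (S1 : Finset (G × G))
    (hS1 : ∀ p ∈ S1, ∃ i j : ℕ, i < k ∧ j < k ∧ p.1 + i • p.2 = x + j • d) :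
    S1.card ≤ k * k * Fintype.card G := by
  classical
  have h : S1.card ≤ ((Finset.range k) ×ˢ (Finset.range k) ×ˢ (Finset.univ : Finset G)).card := by
    set F : G × G → ℕ × ℕ × G := fun p =>
      if h : ∃ i j : ℕ, i < k ∧ j < k ∧ p.1 + i • p.2 = x + j • d
      then (h.choose, h.choose_spec.choose, p.2) else (0, 0, p.2) with hF
    apply Finset.card_le_card_of_injOn F
    · intro p hp
      simp only [hF]
      rw [dif_pos (hS1 p hp)]
      have hs := (hS1 p hp).choose_spec.choose_spec
      simp only [Finset.mem_coe, mem_product, mem_range, mem_univ, and_true]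
      exact ⟨hs.1, hs.2.1⟩
    · intro p hp q hq heq
      simp only [Finset.mem_coe] at hp hq
      rw [hF] at heq
      simp only [dif_pos (hS1 p hp), dif_pos (hS1 q hq), Prod.mk.injEq] at heq
      obtain ⟨h1, h2, h3⟩ := heq
      have hsp := (hS1 p hp).choose_spec.choose_spec
      have hsq := (hS1 q hq).choose_spec.choose_spec
      have hp2 : p.1 + (hS1 p hp).choose • p.2 = q.1 + (hS1 q hq).choose • q.2 := by
        rw [hsp.2.2, hsq.2.2, h2]
      rw [h1, h3] at hp2
      have : p.1 = q.1 := add_right_cancel hp2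
      exact Prod.ext this h3
  calc S1.card ≤ _ := h
    _ = k * k * Fintype.card G := by
      simp [Finset.card_product, mul_assoc]

lemma mainLLL (k r : ℕ) (hk : 2 ≤ k)
    (hord : ∀ g : G, g ≠ 0 → k ≤ addOrderOf g)
    (hM : 4 * (k * k) * Fintype.card G ≤ r ^ (k - 1)) :
    ∀ S : Finset (G × G), ∀ x d : G, d ≠ 0 →
      r ^ (k-1) * ((avoidSet k r S).filter fun c => Mono k r c x d).card
        ≤ 2 * (avoidSet k r S).card := by
  classical
  have hG : 1 ≤ Fintype.card G := Fintype.card_pos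
  have hM16 : 16 ≤ r ^ (k-1) := le_trans (by nlinarith) hM
  intro S
  induction S using Finset.strongInduction with
  | _ S ih =>
    intro x d hd
    by_cases hbad : ∀ p ∈ S, p.2 ≠ 0
    · set P : G × G → Prop := fun p => ∃ i j : ℕ, i < k ∧ j < k ∧ p.1 + i • p.2 = x + j • d
        with hP
      set S1 := S.filter P with hS1
      set S2 := S.filter (fun p => ¬ P p) with hS2
      have hS2sub : S2 ⊆ S := filter_subset _ _
      have havsub : avoidSet k r S ⊆ avoidSet k r S2 := avoid_antitone k r hS2sub
      have hT : ∀ p ∈ S2, ∀ i ∈ Finset.range k, ∀ j ∈ Finset.range k,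
          p.1 + i • p.2 ≠ x + j • d := by
        intro p hp i hi j hj hne
        rw [hS2, mem_filter] at hp
        exact hp.2 ⟨i, j, mem_range.mp hi, mem_range.mp hj, hne⟩
      have h1 : r ^ (k-1) * ((avoidSet k r S).filter fun c => Mono k r c x d).card
          ≤ (avoidSet k r S2).card := by
        calc r ^ (k-1) * ((avoidSet k r S).filter fun c => Mono k r c x d).card
            ≤ r ^ (k-1) * ((avoidSet k r S2).filter fun c => Mono k r c x d).card := by
              exact Nat.mul_le_mul_left _ (card_le_card (filter_subset_filter _ havsub))
          _ ≤ (avoidSet k r S2).card := indep k r hk hord hd S2 hT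
      -- key claim : card (avoidSet S2) ≤ 2 * card (avoidSet S)
      have hclaim : (avoidSet k r S2).card ≤ 2 * (avoidSet k r S).card := by
        by_cases hS1e : S1 = ∅
        · have : S2 = S := by
            rw [hS2]
            apply Finset.filter_true_of_mem
            intro p hp
            intro hPp
            have : p ∈ S1 := by rw [hS1, mem_filter]; exact ⟨hp, hPp⟩
            simp [hS1e] at this
          rw [this]; omega
        · have hS2ss : S2 ⊂ S := by
            obtain ⟨p, hp⟩ := Finset.nonempty_of_ne_empty hS1e
            rw [hS1, mem_filter] at hp
            refine Finset.ssubset_iff_of_subset hS2sub |>.mpr ⟨p, hp.1, ?_⟩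
            rw [hS2, mem_filter]
            simp only [not_and, not_not]
            exact fun _ => hp.2
          set a := (avoidSet k r S).card with ha
          set a2 := (avoidSet k r S2).card with ha2
          have hsplit : (avoidSet k r S2 \ avoidSet k r S).card + a = a2 :=
            Finset.card_sdiff_add_card_eq_card havsub
          have hdelta : (avoidSet k r S2 \ avoidSet k r S)
              ⊆ S1.biUnion (fun p => (avoidSet k r S2).filter (fun c => Mono k r c p.1 p.2)) := by
            intro c hc
            rw [mem_sdiff] at hc
            obtain ⟨hc2, hcS⟩ := hc
            simp only [avoidSet, mem_filter, mem_univ, true_and, not_forall] at hcS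
            obtain ⟨p, hpS, hmono⟩ := hcS
            rw [not_not] at hmono
            have hpP : P p := by
              by_contra hnp
              have hp2 : p ∈ S2 := by rw [hS2, mem_filter]; exact ⟨hpS, hnp⟩
              simp only [avoidSet, mem_filter, mem_univ, true_and] at hc2
              exact hc2 p hp2 hmono
            refine Finset.mem_biUnion.mpr ⟨p, ?_, ?_⟩
            · rw [hS1, mem_filter]; exact ⟨hpS, hpP⟩
            · rw [mem_filter]; exact ⟨hc2, hmono⟩
          have hdcard : (avoidSet k r S2 \ avoidSet k r S).card
              ≤ ∑ p ∈ S1, ((avoidSet k r S2).filter (fun c => Mono k r c p.1 p.2)).card :=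
            le_trans (Finset.card_le_card hdelta) (Finset.card_biUnion_le)
          have hsum : r ^ (k-1) * (avoidSet k r S2 \ avoidSet k r S).card
              ≤ S1.card * (2 * a2) := by
            calc r ^ (k-1) * (avoidSet k r S2 \ avoidSet k r S).card
                ≤ r ^ (k-1) * ∑ p ∈ S1, ((avoidSet k r S2).filter
                    (fun c => Mono k r c p.1 p.2)).card := Nat.mul_le_mul_left _ hdcard
              _ = ∑ p ∈ S1, r ^ (k-1) * ((avoidSet k r S2).filter
                    (fun c => Mono k r c p.1 p.2)).card := Finset.mul_sum _ _ _
              _ ≤ ∑ p ∈ S1, 2 * a2 := by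
                  apply Finset.sum_le_sum
                  intro p hp
                  have hpS : p ∈ S := (filter_subset _ _) hp
                  exact ih S2 hS2ss p.1 p.2 (hbad p hpS)
              _ = S1.card * (2 * a2) := by rw [Finset.sum_const, smul_eq_mul]
          have hS1card : S1.card ≤ k * k * Fintype.card G := by
            apply nbr k x d
            intro p hp
            rw [hS1, mem_filter] at hp
            exact hp.2
          -- arithmetic
          have haux : 2 * (r ^ (k-1) * (avoidSet k r S2 \ avoidSet k r S).card)
              ≤ r ^ (k-1) * a2 := by
            calc 2 * (r ^ (k-1) * (avoidSet k r S2 \ avoidSet k r S).card)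
                ≤ 2 * (S1.card * (2 * a2)) := Nat.mul_le_mul_left _ hsum
              _ = (4 * S1.card) * a2 := by ring
              _ ≤ (4 * (k * k * Fintype.card G)) * a2 := by
                  exact Nat.mul_le_mul_right _ (Nat.mul_le_mul_left _ hS1card)
              _ ≤ r ^ (k-1) * a2 := by
                  apply Nat.mul_le_mul_right
                  calc 4 * (k * k * Fintype.card G) = 4 * (k * k) * Fintype.card G := by ring
                    _ ≤ r ^ (k-1) := hM
          have hMa2 : r ^ (k-1) * a2
              = r ^ (k-1) * (avoidSet k r S2 \ avoidSet k r S).card + r ^ (k-1) * a := by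
            rw [← Nat.mul_add, hsplit]
          have hdla : r ^ (k-1) * (avoidSet k r S2 \ avoidSet k r S).card
              ≤ r ^ (k-1) * a := by omega
          have : (avoidSet k r S2 \ avoidSet k r S).card ≤ a :=
            Nat.le_of_mul_le_mul_left hdla (by omega)
          omega
      exact le_trans h1 (by omega)
    · -- some event is trivially monochromatic, so avoidSet S = ∅
      push_neg at hbad
      obtain ⟨p, hpS, hp2⟩ := hbad
      have : avoidSet k r S = ∅ := by
        rw [Finset.eq_empty_iff_forall_notMem]
        intro c hc
        simp only [avoidSet, mem_filter, mem_univ, true_and] at hc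
        refine hc p hpS ?_
        intro i hi
        rw [hp2, smul_zero, add_zero]
      rw [this]
      simp

lemma avoid_pos (k r : ℕ) (hk : 2 ≤ k) (hr : 1 ≤ r)
    (hord : ∀ g : G, g ≠ 0 → k ≤ addOrderOf g)
    (hM : 4 * (k * k) * Fintype.card G ≤ r ^ (k - 1)) :
    ∀ S : Finset (G × G), (∀ p ∈ S, p.2 ≠ 0) → 0 < (avoidSet k r S).card := by
  classical
  have hG : 1 ≤ Fintype.card G := Fintype.card_pos
  have hM16 : 16 ≤ r ^ (k-1) := le_trans (by nlinarith) hM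
  intro S
  induction S using Finset.induction_on with
  | empty =>
    intro _
    rw [Finset.card_pos]
    exact ⟨fun _ => ⟨0, hr⟩, by simp [avoidSet]⟩
  | @insert a S haS ih =>
    intro hbad
    have hS : ∀ p ∈ S, p.2 ≠ 0 := fun p hp => hbad p (Finset.mem_insert_of_mem hp)
    have hs : 0 < (avoidSet k r S).card := ih hS
    have hins : avoidSet k r (insert a S)
        = (avoidSet k r S).filter (fun c => ¬ Mono k r c a.1 a.2) := by
      ext c
      simp only [avoidSet, mem_filter, mem_univ, true_and, Finset.forall_mem_insert]
      tauto
    have hsplit := Finset.card_filter_add_card_filter_not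
      (s := avoidSet k r S) (p := fun c => Mono k r c a.1 a.2)
    have hmain := mainLLL k r hk hord hM S a.1 a.2 (hbad a (Finset.mem_insert_self a S))
    rw [hins]
    by_contra hz
    push_neg at hz
    rw [Nat.le_zero] at hz
    have hx : ((avoidSet k r S).filter (fun c => Mono k r c a.1 a.2)).card
        = (avoidSet k r S).card := by omega
    rw [hx] at hmain
    have : r ^ (k-1) ≤ 2 := Nat.le_of_mul_le_mul_right
      (by omega : r ^ (k-1) * (avoidSet k r S).card ≤ 2 * (avoidSet k r S).card) hs
    omega

end LLL

theorem kappa_le_of_small {G : Type*} [AddCommGroup G] [Fintype G] (k r : ℕ)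
    (hord : ∀ g : G, g ≠ 0 → k ≤ addOrderOf g)
    (hcard : (Fintype.card G : ℝ) ≤ (r : ℝ) ^ (k - 1) / (4 * k ^ 2)) :
    (∃ c : G → Fin r, ∀ i : Fin r, APFree k (c ⁻¹' {i})) ∧ kappa G r ≤ k := by
  classical
  have hG : 1 ≤ Fintype.card G := Fintype.card_pos
  have hG' : (1:ℝ) ≤ (Fintype.card G : ℝ) := by exact_mod_cast hG
  -- k ≥ 2
  have hk : 2 ≤ k := by
    by_contra h
    push_neg at h
    interval_cases k
    · norm_num at hcard
    · norm_num at hcard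
      linarith
  -- r ≥ 1
  have hr : 1 ≤ r := by
    by_contra h
    push_neg at h
    rw [Nat.lt_one_iff] at h
    subst h
    rw [show ((0:ℕ):ℝ) = 0 by norm_num, zero_pow (by omega : k - 1 ≠ 0)] at hcard
    rw [zero_div] at hcard
    linarith
  -- the integer form of the cardinality bound
  have hM : 4 * (k * k) * Fintype.card G ≤ r ^ (k - 1) := by
    have h4k : (0:ℝ) < 4 * (k:ℝ) ^ 2 := by positivity
    have h2 : (Fintype.card G : ℝ) * (4 * (k:ℝ) ^ 2) ≤ (r:ℝ) ^ (k-1) :=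
      (le_div_iff₀ h4k).mp hcard
    have h3 : ((4 * (k * k) * Fintype.card G : ℕ) : ℝ) ≤ ((r ^ (k-1) : ℕ) : ℝ) := by
      push_cast
      nlinarith [sq_nonneg (k:ℝ)]
    exact_mod_cast h3
  -- apply the local lemma
  set S : Finset (G × G) := Finset.univ.filter (fun p : G × G => p.2 ≠ 0) with hS
  have hpos : 0 < (avoidSet k r S).card :=
    avoid_pos k r hk hr hord hM S (fun p hp => (Finset.mem_filter.mp hp).2)
  obtain ⟨c, hc⟩ := Finset.card_pos.mp hpos
  simp only [avoidSet, Finset.mem_filter, Finset.mem_univ, true_and] at hc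
  have hfree : ∀ i : Fin r, APFree k (c ⁻¹' {i}) := by
    intro i x d hd hsub
    refine hc (x, d) (Finset.mem_filter.mpr ⟨Finset.mem_univ _, hd⟩) ?_
    intro j hj
    have h1 : c (x + j • d) = i := by
      have : x + j • d ∈ AP k x d := ⟨j, Finset.mem_range.mp hj, rfl⟩
      exact hsub this
    have h2 : c x = i := by
      have : x ∈ AP k x d := ⟨0, by omega, by simp⟩
      exact hsub this
    rw [h1, h2]
  exact ⟨⟨c, hfree⟩, Nat.sInf_le ⟨c, hfree⟩⟩
end

section
/- Let H₁, H₂ be finite abelian groups, G = H₁ × H₂, and k a positive integer. Suppose: (1) there exist colorings C₁ : H₁ → [r₁] and C₂ : H₂ → [r₂ + r₃] whose color classes are all k-AP-free; (2) |C₂⁻¹({r₂+1,…,r₂+r₃})| ≤ δ|H₂| for some δ > 0; (3) every non-identity element of H₁ has order ≥ Q; and (4) |G|² ≤ δ^{-min{Q,k}}. Then there exists a coloring c : G → [r₁r₂ + r₃] with no monochromatic non-trivial k-term arithmetic progression. -/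
open Finset

/-- Encoding of a pair of colors into `Fin (r₁ * r₂ + r₃)`. -/
def blowupEnc {r₁ r₂ r₃ : ℕ} (a : Fin r₁) (b : Fin (r₂ + r₃)) : Fin (r₁ * r₂ + r₃) :=
  if h : (b : ℕ) < r₂ then
    ⟨(a : ℕ) * r₂ + b, by
      have ha : (a : ℕ) < r₁ := a.isLt
      calc (a : ℕ) * r₂ + b < (a + 1) * r₂ := by
            rw [add_mul, one_mul]; omega
        _ ≤ r₁ * r₂ := Nat.mul_le_mul_right _ ha
        _ ≤ r₁ * r₂ + r₃ := Nat.le_add_right _ _⟩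
  else ⟨r₁ * r₂ + ((b : ℕ) - r₂), by have := b.isLt; omega⟩

lemma blowupEnc_small {r₁ r₂ r₃ : ℕ} {a : Fin r₁} {b : Fin (r₂ + r₃)} (h : (b : ℕ) < r₂) :
    ((blowupEnc a b : Fin (r₁ * r₂ + r₃)) : ℕ) < r₁ * r₂ := by
  rw [blowupEnc, dif_pos h]
  have ha : (a : ℕ) < r₁ := a.isLt
  calc (a : ℕ) * r₂ + b < (a + 1) * r₂ := by rw [add_mul, one_mul]; omega
    _ ≤ r₁ * r₂ := Nat.mul_le_mul_right _ ha

lemma blowupEnc_large {r₁ r₂ r₃ : ℕ} {a : Fin r₁} {b : Fin (r₂ + r₃)} (h : ¬ (b : ℕ) < r₂) :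
    ((blowupEnc a b : Fin (r₁ * r₂ + r₃)) : ℕ) = r₁ * r₂ + ((b : ℕ) - r₂) := by
  rw [blowupEnc, dif_neg h]

lemma blowupEnc_eq {r₁ r₂ r₃ : ℕ} {a a' : Fin r₁} {b b' : Fin (r₂ + r₃)}
    (h : blowupEnc (r₃ := r₃) a b = blowupEnc a' b') :
    b = b' ∧ ((b : ℕ) < r₂ → a = a') := by
  by_cases h1 : (b : ℕ) < r₂
  · by_cases h2 : (b' : ℕ) < r₂
    · have hv : (a : ℕ) * r₂ + b = (a' : ℕ) * r₂ + b' := by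
        have := congrArg (fun z : Fin (r₁ * r₂ + r₃) => (z : ℕ)) h
        rwa [blowupEnc, dif_pos h1, blowupEnc, dif_pos h2] at this
      have haa : (a : ℕ) = a' := by
        rcases Nat.lt_trichotomy (a : ℕ) a' with hlt | he | hgt
        · have : ((a : ℕ) + 1) * r₂ ≤ (a' : ℕ) * r₂ := Nat.mul_le_mul_right _ hlt
          rw [add_mul, one_mul] at this; omega
        · exact he
        · have : ((a' : ℕ) + 1) * r₂ ≤ (a : ℕ) * r₂ := Nat.mul_le_mul_right _ hgt
          rw [add_mul, one_mul] at this; omega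
      rw [haa] at hv
      exact ⟨Fin.ext (by omega), fun _ => Fin.ext haa⟩
    · exfalso
      have hs := blowupEnc_small (r₃ := r₃) (a := a) h1
      have hl := blowupEnc_large (r₃ := r₃) (a := a') h2
      rw [h] at hs; omega
  · by_cases h2 : (b' : ℕ) < r₂
    · exfalso
      have hs := blowupEnc_small (r₃ := r₃) (a := a') h2
      have hl := blowupEnc_large (r₃ := r₃) (a := a) h1
      rw [h] at hl; omega
    · have hl := blowupEnc_large (r₃ := r₃) (a := a) h1
      have hl' := blowupEnc_large (r₃ := r₃) (a := a') h2
      rw [h] at hl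
      refine ⟨Fin.ext ?_, fun hc => absurd hc h1⟩
      omega

lemma prod_nsmul_def {α β : Type*} [AddMonoid α] [AddMonoid β] (n : ℕ) (p : α × β) :
    n • p = (n • p.1, n • p.2) := by
  ext <;> simp

set_option maxHeartbeats 1000000 in
theorem blowup {H₁ H₂ : Type*} [AddCommGroup H₁] [AddCommGroup H₂]
    [Fintype H₁] [Fintype H₂] (r₁ r₂ r₃ k Q : ℕ) (δ : ℝ) (hδ : 0 < δ)
    (C₁ : H₁ → Fin r₁) (hC₁ : ∀ i : Fin r₁, APFree k (C₁ ⁻¹' {i}))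
    (C₂ : H₂ → Fin (r₂ + r₃)) (hC₂ : ∀ j : Fin (r₂ + r₃), APFree k (C₂ ⁻¹' {j}))
    (hsparse : ({y : H₂ | r₂ ≤ (C₂ y : ℕ)}.ncard : ℝ) ≤ δ * Fintype.card H₂)
    (hord : ∀ h : H₁, h ≠ 0 → Q ≤ addOrderOf h)
    (hsize : ((Fintype.card (H₁ × H₂) : ℝ)) ^ 2 ≤ δ ^ (-(min Q k : ℤ))) :
    ∃ c : H₁ × H₂ → Fin (r₁ * r₂ + r₃), ∀ i, APFree k (c ⁻¹' {i}) := by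
  classical
  set m := min Q k with hm
  have hr₁ : 0 < r₁ := (C₁ 0).pos
  have hr₂₃ : 0 < r₂ + r₃ := (C₂ 0).pos
  have hrtot : 0 < r₁ * r₂ + r₃ := by
    rcases Nat.eq_zero_or_pos r₂ with h | h
    · subst h; omega
    · exact Nat.lt_of_lt_of_le (Nat.mul_pos hr₁ h) (Nat.le_add_right _ _)
  by_cases hG1 : Fintype.card (H₁ × H₂) = 1
  · haveI : Subsingleton (H₁ × H₂) := Fintype.card_le_one_iff_subsingleton.mp hG1.le
    refine ⟨fun _ => ⟨0, hrtot⟩, fun i x d hd _ => hd (Subsingleton.elim d 0)⟩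
  -- Main case
  have hG2 : 2 ≤ Fintype.card (H₁ × H₂) := by
    have := Fintype.card_pos (α := H₁ × H₂); omega
  have hδpow : ((Fintype.card (H₁ × H₂) : ℝ)) ^ 2 * δ ^ m ≤ 1 := by
    rw [show (-((Q : ℤ) ⊓ (k : ℤ))) = -(m : ℤ) by rw [hm]; push_cast; ring] at hsize
    rw [show δ ^ (-(m : ℤ)) = (δ ^ m)⁻¹ by rw [zpow_neg, zpow_natCast]] at hsize
    have hp : (0 : ℝ) < δ ^ m := pow_pos hδ m
    have := mul_le_mul_of_nonneg_right hsize hp.le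
    rwa [inv_mul_cancel₀ hp.ne'] at this
  have hk : 0 < k := by
    by_contra hk0
    have hm0 : m = 0 := by omega
    rw [hm0, pow_zero, mul_one] at hδpow
    have h2 : (2 : ℝ) ≤ (Fintype.card (H₁ × H₂) : ℝ) := by exact_mod_cast hG2
    nlinarith [h2, hδpow]
  -- The rare set
  set R : Finset H₂ := univ.filter (fun y => r₂ ≤ (C₂ y : ℕ)) with hRdef
  have hRcard : ((R.card : ℝ)) ≤ δ * Fintype.card H₂ := by
    have hset : {y : H₂ | r₂ ≤ (C₂ y : ℕ)} = ↑R := by ext y; simp [hRdef]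
    rwa [hset, Set.ncard_coe_finset] at hsparse
  set n := Fintype.card H₁ with hn
  -- Bad shifts for a given AP
  set Bad : (H₁ × H₂) → (H₁ × H₂) → Finset (H₁ → H₂) := fun x d =>
    univ.filter (fun s => ∀ i < k, x.2 + i • d.2 + s (x.1 + i • d.1) ∈ R) with hBaddef
  have key : ∀ x d : H₁ × H₂, d.1 ≠ 0 →
      ((Bad x d).card : ℝ) ≤ δ ^ m * (Fintype.card H₂ : ℝ) ^ n := by
    intro x d hd
    set A : H₁ → Finset H₂ := fun t =>
      if h : ∃ i, i < k ∧ x.1 + i • d.1 = t then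
        R.image (fun r => r - (x.2 + h.choose • d.2)) else Finset.univ with hAdef
    have hsub : Bad x d ⊆ Fintype.piFinset A := by
      intro s hs
      simp only [hBaddef, Finset.mem_filter, Finset.mem_univ, true_and] at hs
      rw [Fintype.mem_piFinset]
      intro t
      simp only [hAdef]
      split_ifs with h
      · obtain ⟨hik, ht⟩ := h.choose_spec
        have hmem := hs h.choose hik
        rw [ht] at hmem
        exact Finset.mem_image.mpr ⟨_, hmem, by abel⟩
      · exact mem_univ _
    set T : Finset H₁ := (range k).image (fun i => x.1 + i • d.1) with hTdef
    set L := T.card with hL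
    have hAT : ∀ t ∈ T, (A t).card ≤ R.card := by
      intro t ht
      have h : ∃ i, i < k ∧ x.1 + i • d.1 = t := by
        obtain ⟨i, hi, hit⟩ := Finset.mem_image.mp ht
        exact ⟨i, mem_range.mp hi, hit⟩
      simp only [hAdef]
      rw [dif_pos h]
      exact card_image_le
    have hAnT : ∀ t ∈ Tᶜ, (A t).card = Fintype.card H₂ := by
      intro t ht
      have h : ¬ ∃ i, i < k ∧ x.1 + i • d.1 = t := by
        rintro ⟨i, hi, hit⟩
        exact (mem_compl.mp ht) (Finset.mem_image.mpr ⟨i, mem_range.mpr hi, hit⟩)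
      simp only [hAdef]
      rw [dif_neg h]
      exact card_univ
    have hcard : (Bad x d).card ≤ R.card ^ L * (Fintype.card H₂) ^ (n - L) := by
      calc (Bad x d).card ≤ (Fintype.piFinset A).card := card_le_card hsub
        _ = ∏ t, (A t).card := Fintype.card_piFinset A
        _ = (∏ t ∈ T, (A t).card) * ∏ t ∈ Tᶜ, (A t).card := (prod_mul_prod_compl T _).symm
        _ ≤ R.card ^ L * (Fintype.card H₂) ^ (n - L) := by
            apply Nat.mul_le_mul
            · exact prod_le_pow_card T _ _ hAT
            · rw [Finset.prod_congr rfl hAnT, Finset.prod_const, card_compl, hn]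
    -- lower bound on L
    have hmL : m ≤ L := by
      have hQo : Q ≤ addOrderOf d.1 := hord d.1 hd
      set o := min (addOrderOf d.1) k with ho
      have hinj : Set.InjOn (fun i : ℕ => x.1 + i • d.1) ↑(range o) := by
        intro i hi j hj hij
        simp only [coe_range, Set.mem_Iio] at hi hj
        have hsm : i • d.1 = j • d.1 := by simpa using add_left_cancel hij
        exact nsmul_injOn_Iio_addOrderOf (lt_of_lt_of_le hi (min_le_left _ _))
          (lt_of_lt_of_le hj (min_le_left _ _)) hsm
      have hsubT : (range o).image (fun i => x.1 + i • d.1) ⊆ T := by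
        apply image_subset_image
        exact range_subset_range.mpr (min_le_right _ _)
      have hoL : o ≤ L := by
        rw [hL, ← Finset.card_range o, ← Finset.card_image_of_injOn hinj]
        exact card_le_card hsubT
      omega
    have hLn : L ≤ n := by rw [hL, hn]; exact card_le_univ T
    -- numeric bound
    have hRle : ((R.card : ℝ)) ≤ (Fintype.card H₂ : ℝ) := by
      exact_mod_cast card_le_univ R
    have e1 : ((R.card : ℝ)) ^ m ≤ (δ * (Fintype.card H₂ : ℝ)) ^ m :=
      pow_le_pow_left₀ (Nat.cast_nonneg _) hRcard m
    have e2 : ((R.card : ℝ)) ^ (L - m) ≤ (Fintype.card H₂ : ℝ) ^ (L - m) :=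
      pow_le_pow_left₀ (Nat.cast_nonneg _) hRle _
    calc ((Bad x d).card : ℝ) ≤ (R.card : ℝ) ^ L * (Fintype.card H₂ : ℝ) ^ (n - L) := by
          exact_mod_cast hcard
      _ = (R.card : ℝ) ^ m * (R.card : ℝ) ^ (L - m) * (Fintype.card H₂ : ℝ) ^ (n - L) := by
          rw [← pow_add, Nat.add_sub_cancel' hmL]
      _ ≤ (δ * (Fintype.card H₂ : ℝ)) ^ m * (Fintype.card H₂ : ℝ) ^ (L - m)
            * (Fintype.card H₂ : ℝ) ^ (n - L) := by
          have hz1 : (0 : ℝ) ≤ (Fintype.card H₂ : ℝ) ^ (n - L) :=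
            pow_nonneg (Nat.cast_nonneg _) _
          have hz2 : (0 : ℝ) ≤ (δ * (Fintype.card H₂ : ℝ)) ^ m :=
            pow_nonneg (mul_nonneg hδ.le (Nat.cast_nonneg _)) _
          have hz3 : (0 : ℝ) ≤ (Fintype.card H₂ : ℝ) ^ (L - m) :=
            pow_nonneg (Nat.cast_nonneg _) _
          exact mul_le_mul
            (mul_le_mul e1 e2 (pow_nonneg (Nat.cast_nonneg _) _) hz2)
            le_rfl hz1 (mul_nonneg hz2 hz3)
      _ = δ ^ m * ((Fintype.card H₂ : ℝ) ^ m * (Fintype.card H₂ : ℝ) ^ (L - m)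
            * (Fintype.card H₂ : ℝ) ^ (n - L)) := by rw [mul_pow]; ring
      _ = δ ^ m * (Fintype.card H₂ : ℝ) ^ n := by
          rw [← pow_add, ← pow_add, show m + (L - m) + (n - L) = n by omega]
  -- Union bound
  set P : Finset ((H₁ × H₂) × (H₁ × H₂)) := univ.filter (fun p => p.2.1 ≠ 0) with hPdef
  have hPlt : P.card < Fintype.card (H₁ × H₂) * Fintype.card (H₁ × H₂) := by
    have hss : P ⊂ univ := by
      refine Finset.ssubset_univ_iff.mpr ?_
      intro h
      have h0 : ((0, 0) : (H₁ × H₂) × (H₁ × H₂)) ∈ P := h ▸ mem_univ _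
      simp [hPdef] at h0
    have := Finset.card_lt_card hss
    rwa [card_univ, Fintype.card_prod] at this
  set BadAll : Finset (H₁ → H₂) := P.biUnion (fun p => Bad p.1 p.2) with hBAdef
  have hH₂pos : (0 : ℝ) < (Fintype.card H₂ : ℝ) := by exact_mod_cast Fintype.card_pos
  have hBA : ((BadAll.card : ℝ)) < (Fintype.card H₂ : ℝ) ^ n := by
    calc ((BadAll.card : ℝ)) ≤ ∑ p ∈ P, ((Bad p.1 p.2).card : ℝ) := by
          rw [hBAdef]; exact_mod_cast Finset.card_biUnion_le
      _ ≤ ∑ _p ∈ P, δ ^ m * (Fintype.card H₂ : ℝ) ^ n := by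
          apply Finset.sum_le_sum
          intro p hp
          exact key p.1 p.2 (mem_filter.mp hp).2
      _ = (P.card : ℝ) * (δ ^ m * (Fintype.card H₂ : ℝ) ^ n) := by
          rw [Finset.sum_const, nsmul_eq_mul]
      _ < ((Fintype.card (H₁ × H₂) : ℝ)) ^ 2 * (δ ^ m * (Fintype.card H₂ : ℝ) ^ n) := by
          apply mul_lt_mul_of_pos_right
          · rw [sq]; exact_mod_cast hPlt
          · exact mul_pos (pow_pos hδ _) (pow_pos hH₂pos _)
      _ = ((Fintype.card (H₁ × H₂) : ℝ)) ^ 2 * δ ^ m * (Fintype.card H₂ : ℝ) ^ n := by ring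
      _ ≤ 1 * (Fintype.card H₂ : ℝ) ^ n := by
          exact mul_le_mul_of_nonneg_right hδpow (pow_nonneg hH₂pos.le _)
      _ = (Fintype.card H₂ : ℝ) ^ n := one_mul _
  -- extract a good shift
  obtain ⟨s, hsgood⟩ : ∃ s : H₁ → H₂, ∀ x d : H₁ × H₂, d.1 ≠ 0 →
      ∃ i < k, (C₂ (x.2 + i • d.2 + s (x.1 + i • d.1)) : ℕ) < r₂ := by
    have hne : ∃ s : H₁ → H₂, s ∉ BadAll := by
      by_contra hcon
      push_neg at hcon
      have huniv : BadAll = univ := Finset.eq_univ_iff_forall.mpr hcon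
      rw [huniv, card_univ, Fintype.card_fun, ← hn] at hBA
      push_cast at hBA
      exact lt_irrefl _ hBA
    obtain ⟨s, hs⟩ := hne
    refine ⟨s, fun x d hd => ?_⟩
    have hnb : s ∉ Bad x d := fun hb => hs (Finset.mem_biUnion.mpr
      ⟨(x, d), mem_filter.mpr ⟨mem_univ _, hd⟩, hb⟩)
    simp only [hBaddef, Finset.mem_filter, mem_univ, true_and, not_forall] at hnb
    obtain ⟨i, hi, hir⟩ := hnb
    refine ⟨i, hi, ?_⟩
    have hnr : ¬ r₂ ≤ (C₂ (x.2 + i • d.2 + s (x.1 + i • d.1)) : ℕ) := by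
      intro hle
      exact hir (mem_filter.mpr ⟨mem_univ _, hle⟩)
    omega
  -- the coloring
  set c : H₁ × H₂ → Fin (r₁ * r₂ + r₃) :=
    fun p => blowupEnc (C₁ p.1) (C₂ (p.2 + s p.1)) with hcdef
  refine ⟨c, ?_⟩
  intro i x d hd hsubAP
  have hcol : ∀ j : ℕ, j < k →
      blowupEnc (r₃ := r₃) (C₁ (x.1 + j • d.1)) (C₂ (x.2 + j • d.2 + s (x.1 + j • d.1))) = i := by
    intro j hj
    have hmem : (x + j • d) ∈ AP k x d := ⟨j, hj, rfl⟩
    have h := hsubAP hmem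
    simp only [Set.mem_preimage, Set.mem_singleton_iff, hcdef, prod_nsmul_def,
      Prod.fst_add, Prod.snd_add] at h
    exact h
  by_cases hd1 : d.1 = 0
  · -- difference lives in H₂
    have hd2 : d.2 ≠ 0 := fun h2 => hd (Prod.ext hd1 h2)
    refine hC₂ (C₂ (x.2 + s x.1)) (x.2 + s x.1) d.2 hd2 ?_
    rintro z ⟨j, hj, rfl⟩
    have ej := hcol j hj
    have e0 := hcol 0 hk
    simp only [zero_smul, add_zero] at e0
    rw [hd1, smul_zero, add_zero] at ej
    have heq := blowupEnc_eq (ej.trans e0.symm)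
    simp only [Set.mem_preimage, Set.mem_singleton_iff]
    rw [show x.2 + s x.1 + j • d.2 = x.2 + j • d.2 + s x.1 by abel]
    exact heq.1
  · -- difference has nonzero H₁ component: use the good shift
    obtain ⟨i₀, hi₀k, hi₀⟩ := hsgood x d hd1
    refine hC₁ (C₁ (x.1 + i₀ • d.1)) x.1 d.1 hd1 ?_
    rintro z ⟨j, hj, rfl⟩
    have ej := hcol j hj
    have e0 := hcol i₀ hi₀k
    have heq := blowupEnc_eq (e0.trans ej.symm)
    simp only [Set.mem_preimage, Set.mem_singleton_iff]
    exact (heq.2 hi₀).symm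
end

section
/- For any prime p, t ≥ 1, and k ≥ p, the subset S ⊆ ℤ/p^tℤ consisting of residues with all base-p digits in {1,…,p-1} is k-AP-free, and |ℤ/p^tℤ \ S| ≤ (t/p)·p^t. -/
lemma sum_pow_lt (p t : ℕ) (hp : 2 ≤ p) (c : ℕ → ℕ) (hc : ∀ i < t, c i < p) :
    ∑ i ∈ Finset.range t, c i * p ^ i < p ^ t := by
  induction t with
  | zero => simp
  | succ t ih =>
    rw [Finset.sum_range_succ]
    have h1 : ∑ i ∈ Finset.range t, c i * p ^ i < p ^ t :=
      ih (fun i hi => hc i (hi.trans (Nat.lt_succ_self t)))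
    have h2 : c t ≤ p - 1 := by have := hc t (Nat.lt_succ_self t); omega
    have h3 : c t * p ^ t ≤ (p - 1) * p ^ t := Nat.mul_le_mul_right _ h2
    have h4 : p ^ t + (p - 1) * p ^ t = p ^ (t + 1) := by
      have e1 : p ^ t + (p - 1) * p ^ t = (1 + (p - 1)) * p ^ t := by ring
      have e2 : 1 + (p - 1) = p := by omega
      rw [e1, e2, pow_succ, mul_comm]
    omega

lemma digit_sum (p : ℕ) (hp : 2 ≤ p) (c : ℕ → ℕ) :
    ∀ t, (∀ i < t, c i < p) → ∀ j < t,
    (∑ i ∈ Finset.range t, c i * p ^ i) / p ^ j % p = c j := by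
  intro t
  induction t with
  | zero => omega
  | succ t ih =>
    intro hc j hj
    rw [Finset.sum_range_succ]
    have hpj : 0 < p ^ j := Nat.pow_pos (by omega)
    rcases Nat.lt_or_ge j t with hjt | hjt
    · have e0 : j + (t - j) = t := by omega
      have hdvd : c t * p ^ t = p ^ j * (c t * p ^ (t - j)) := by
        rw [← mul_assoc, mul_comm (p ^ j), mul_assoc, ← pow_add, e0]
      have e1 : c t * p ^ (t - j) = c t * p ^ (t - j - 1) * p := by
        rw [mul_assoc, ← pow_succ]
        congr 2
        omega
      rw [hdvd, Nat.add_mul_div_left _ _ hpj, e1, Nat.add_mul_mod_self_right]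
      exact ih (fun i hi => hc i (hi.trans (Nat.lt_succ_self t))) j hjt
    · have hjt' : j = t := by omega
      subst hjt'
      have hlt : ∑ i ∈ Finset.range j, c i * p ^ i < p ^ j :=
        sum_pow_lt p j hp c (fun i hi => hc i (hi.trans (Nat.lt_succ_self j)))
      rw [Nat.add_mul_div_right _ _ hpj,
        Nat.div_eq_of_lt hlt, Nat.zero_add, Nat.mod_eq_of_lt (hc j (Nat.lt_succ_self j))]

theorem digit_set_kAPFree_sparse (p t k : ℕ) (hp : p.Prime) (ht : 1 ≤ t) (hk : p ≤ k) :
    ∀ S : Set (ZMod (p ^ t)),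
      S = Set.range (fun f : Fin t → Fin (p - 1) =>
        ((∑ i : Fin t, ((f i : ℕ) + 1) * p ^ (i : ℕ) : ℕ) : ZMod (p ^ t))) →
      APFree k S ∧ ((Sᶜ.ncard : ℝ)) ≤ ((t : ℝ) / p) * p ^ t := by
  intro S hS
  have hp2 : 2 ≤ p := hp.two_le
  haveI : Fact p.Prime := ⟨hp⟩
  have hNpos : 0 < p ^ t := Nat.pow_pos (by omega)
  haveI : NeZero (p ^ t) := ⟨hNpos.ne'⟩
  -- coefficient functions
  set cfun : (Fin t → Fin (p - 1)) → ℕ → ℕ :=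
    fun f i => if h : i < t then ((f ⟨i, h⟩ : ℕ) + 1) else 0 with hcfun
  have hc : ∀ f, ∀ i, i < t → cfun f i < p := by
    intro f i hi
    simp only [hcfun, dif_pos hi]
    have := (f ⟨i, hi⟩).isLt
    omega
  have hsum_eq : ∀ f : Fin t → Fin (p - 1),
      (∑ i : Fin t, ((f i : ℕ) + 1) * p ^ (i : ℕ)) =
        ∑ i ∈ Finset.range t, cfun f i * p ^ i := by
    intro f
    rw [← Fin.sum_univ_eq_sum_range (fun i => cfun f i * p ^ i) t]
    apply Finset.sum_congr rfl
    intro i _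
    simp [hcfun, i.isLt]
  have hval : ∀ f : Fin t → Fin (p - 1),
      ((((∑ i : Fin t, ((f i : ℕ) + 1) * p ^ (i : ℕ) : ℕ)) : ZMod (p ^ t))).val =
        ∑ i ∈ Finset.range t, cfun f i * p ^ i := by
    intro f
    rw [hsum_eq f]
    exact ZMod.val_cast_of_lt (sum_pow_lt p t hp2 (cfun f) (hc f))
  -- every element of S has all base-p digits nonzero
  have key : ∀ y ∈ S, ∀ j, j < t → y.val / p ^ j % p ≠ 0 := by
    intro y hy j hj
    rw [hS] at hy
    obtain ⟨f, rfl⟩ := hy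
    rw [hval f, digit_sum p hp2 (cfun f) t (hc f) j hj]
    simp only [hcfun, dif_pos hj]
    omega
  constructor
  · -- APFree
    intro x d hd hsub
    set m := d.val with hm
    have hm0 : m ≠ 0 := by
      simpa [hm, ZMod.val_eq_zero] using hd
    set j := m.factorization p with hj
    set u := m / p ^ j with hu
    have hmu : p ^ j * u = m := Nat.ordProj_mul_ordCompl_eq_self m p
    have hpu : ¬ p ∣ u := Nat.not_dvd_ordCompl hp hm0
    have hjt : j < t := by
      have h1 : p ^ j ≤ m := Nat.le_of_dvd (Nat.pos_of_ne_zero hm0) (Nat.ordProj_dvd m p)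
      have h2 : m < p ^ t := ZMod.val_lt d
      exact (Nat.pow_lt_pow_iff_right hp.one_lt).mp (lt_of_le_of_lt h1 h2)
    have hpj : 0 < p ^ j := Nat.pow_pos (by omega)
    set a := x.val with ha
    set q := a / p ^ j with hq
    set r := a % p ^ j with hr
    have hu0 : (u : ZMod p) ≠ 0 := by
      rw [Ne, ZMod.natCast_eq_zero_iff]
      exact hpu
    set z : ZMod p := -(q : ZMod p) * (u : ZMod p)⁻¹ with hz
    set i := z.val with hi
    have hip : i < p := ZMod.val_lt z
    have hcast : ((q + i * u : ℕ) : ZMod p) = 0 := by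
      push_cast
      have h1 : ((i : ℕ) : ZMod p) = z := by
        simp [hi, ZMod.natCast_val, ZMod.cast_id]
      rw [h1, hz]
      have h2 : (u : ZMod p)⁻¹ * (u : ZMod p) = 1 := inv_mul_cancel₀ hu0
      calc (q : ZMod p) + -(q : ZMod p) * (u : ZMod p)⁻¹ * (u : ZMod p)
          = (q : ZMod p) + -(q : ZMod p) * ((u : ZMod p)⁻¹ * (u : ZMod p)) := by ring
        _ = 0 := by rw [h2]; ring
    have hmod : (q + i * u) % p = 0 := by
      have := (ZMod.natCast_eq_zero_iff _ p).mp hcast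
      omega
    -- the AP member x + i • d lies in S
    have hmem : x + i • d ∈ S := hsub ⟨i, lt_of_lt_of_le hip hk, rfl⟩
    -- compute its value
    have hy : x + i • d = ((a + i * m : ℕ) : ZMod (p ^ t)) := by
      push_cast
      rw [ha, hm]
      simp [ZMod.natCast_val, ZMod.cast_id, nsmul_eq_mul]
    have hyval : (x + i • d).val = (a + i * m) % p ^ t := by
      rw [hy, ZMod.val_natCast]
    -- compute digit j
    have hdiv : (a + i * m) / p ^ j = q + i * u := by
      have haa : p ^ j * q + r = a := Nat.div_add_mod a (p ^ j)
      have e : a + i * m = p ^ j * (q + i * u) + r := by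
        rw [← hmu, ← haa]; ring
      rw [e, Nat.mul_add_div hpj, Nat.div_eq_of_lt (Nat.mod_lt a hpj), Nat.add_zero]
    have hdigit : (x + i • d).val / p ^ j % p = 0 := by
      rw [hyval,
        ← Nat.mod_mul_right_div_self,
        Nat.mod_mod_of_dvd _ (by
          have : p ^ j * p = p ^ (j + 1) := by rw [pow_succ]
          rw [this]
          exact pow_dvd_pow p hjt),
        Nat.mod_mul_right_div_self, hdiv, hmod]
    exact key _ hmem j hjt hdigit
  · -- cardinality bound
    have hinj : Function.Injective (fun f : Fin t → Fin (p - 1) =>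
        ((∑ i : Fin t, ((f i : ℕ) + 1) * p ^ (i : ℕ) : ℕ) : ZMod (p ^ t))) := by
      intro f g hfg
      have hv : ∑ i ∈ Finset.range t, cfun f i * p ^ i =
          ∑ i ∈ Finset.range t, cfun g i * p ^ i := by
        have := congrArg ZMod.val hfg
        rwa [hval f, hval g] at this
      funext i
      have h1 := digit_sum p hp2 (cfun f) t (hc f) i i.isLt
      have h2 := digit_sum p hp2 (cfun g) t (hc g) i i.isLt
      rw [hv, h2] at h1
      simp only [hcfun, dif_pos i.isLt, Fin.eta] at h1
      exact Fin.ext (by omega)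
    have hScard : S.ncard = (p - 1) ^ t := by
      rw [hS, ← Nat.card_coe_set_eq, Nat.card_range_of_injective hinj]
      simp [Nat.card_eq_fintype_card]
    have hcompl : Sᶜ.ncard = p ^ t - (p - 1) ^ t := by
      have h := Set.ncard_add_ncard_compl S
      rw [hScard, Nat.card_zmod] at h
      omega
    rw [hcompl]
    have hle : (p - 1) ^ t ≤ p ^ t := Nat.pow_le_pow_left (by omega) t
    rw [Nat.cast_sub hle]
    have hcast1 : (((p - 1) ^ t : ℕ) : ℝ) = ((p : ℝ) - 1) ^ t := by
      rw [Nat.cast_pow, Nat.cast_sub (by omega : 1 ≤ p), Nat.cast_one]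
    rw [hcast1]
    have hp0 : (0 : ℝ) < p := by positivity
    have hb := one_add_mul_le_pow (a := -(1 / (p : ℝ))) (by
      have : 1 / (p : ℝ) ≤ 1 := by
        rw [div_le_one hp0]
        exact_mod_cast hp.one_le
      linarith) t
    have key2 : (1 + -(1 / (p : ℝ))) ^ t * (p : ℝ) ^ t = ((p : ℝ) - 1) ^ t := by
      rw [← mul_pow]
      congr 1
      field_simp
      ring
    have hptpos : (0 : ℝ) < (p : ℝ) ^ t := by positivity
    have hb2 : (1 + (t : ℝ) * -(1 / p)) * (p : ℝ) ^ t ≤ ((p : ℝ) - 1) ^ t := by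
      rw [← key2]
      exact mul_le_mul_of_nonneg_right hb hptpos.le
    have : (1 + (t : ℝ) * -(1 / p)) * (p : ℝ) ^ t = (p : ℝ) ^ t - (t : ℝ) / p * (p : ℝ) ^ t := by
      ring
    rw [this] at hb2
    push_cast
    linarith
end
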